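/- arXiv:1103.6257 — 5 statements merged into one kernel-verified Lean document; each statement's English description precedes it below -/
import Mathlib

section
/- Let δ, ε > 0 and let τ, ψ : (−δ, ε) → ℝ be C^∞ functions such that: (a) τ'(0) = 0 ≠ τ''(0) and τ'·τ'' ≠ 0 everywhere on (−δ, 0) ∪ (0, ε); (b) the restrictions τ|_{(−δ,0)} and τ|_{(0,ε)} have the same range I ⊂ ℝ; (c) ψ(t) = G(τ(t)) for some function G : I → ℝ and all t ∈ (−δ, 0) ∪ (0, ε). Then G admits a C^∞ extension to the half-open interval I ∪ {τ(0)}. -/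
/-!
Assume `τ''(0) > 0` (otherwise replace `τ` by `-τ`). Hadamard's lemma, with the explicit factor
`m u = ∫₀¹ f'(t u) dt`, applied twice gives `τ t = τ 0 + t² m t` with `m` smooth; by Rolle `m` has
no zero, since `τ' ≠ 0` off `0`, so `m > 0` and `σ t = t √(m t)` is a smooth coordinate with
`σ' > 0` and `τ = τ 0 + σ²`. Then `φ = ψ ∘ σ⁻¹` is smooth, and it is even near `0`: the two
branches of `τ` have the same range and `ψ` factors through `τ`. The extension is
`s ↦ φ √(s - τ 0)`. It is smooth up to `s = τ 0` because for a smooth even `φ` the function `φ ∘ √`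
has derivative `χ ∘ √` with `χ = (u ↦ φ' u / (2u))` again smooth and even, so the argument
iterates.
-/

open Set Filter Topology intervalIntegral
open scoped ContDiff

noncomputable def radialMoment (g : ℝ → ℝ) (k : ℕ) (u : ℝ) : ℝ :=
  ∫ t in (0 : ℝ)..1, t ^ k * g (t * u)

section Hadamard

variable {s : Set ℝ} {f g : ℝ → ℝ} {u : ℝ}

lemma StarConvex.mul_mem (hs : StarConvex ℝ 0 s) {x t : ℝ} (hx : x ∈ s) (ht : t ∈ uIcc 0 1) :
    t * x ∈ s := by
  rw [uIcc_of_le zero_le_one] at ht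
  exact hs.smul_mem hx ht.1 ht.2

lemma continuousOn_radialIntegrand (hs : StarConvex ℝ 0 s) (hg : ContinuousOn g s) (k : ℕ)
    (hu : u ∈ s) : ContinuousOn (fun t => t ^ k * g (t * u)) (uIcc 0 1) :=
  (continuousOn_pow k).mul <| hg.comp (continuousOn_id.mul continuousOn_const)
    fun _ ht => hs.mul_mem hu ht

lemma radialMoment_zero_right (g : ℝ → ℝ) (k : ℕ) : radialMoment g k 0 = g 0 / (k + 1) := by
  simp [radialMoment, integral_mul_const, integral_pow, div_eq_inv_mul]

lemma hasDerivAt_radialMoment (hso : IsOpen s) (hs : StarConvex ℝ 0 s)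
    (hg : ContDiffOn ℝ 1 g s) (k : ℕ) (hu : u ∈ s) :
    HasDerivAt (radialMoment g k) (radialMoment (deriv g) (k + 1) u) u := by
  have hg' : ContinuousOn (deriv g) s := hg.continuousOn_deriv_of_isOpen hso le_rfl
  obtain ⟨r, hr, hrs⟩ := Metric.nhds_basis_closedBall.mem_iff.1 (hso.mem_nhds hu)
  -- the points `t * x` stay in a compact subset of `s`, on which `deriv g` is bounded
  set K := (fun p : ℝ × ℝ => p.1 * p.2) '' (uIcc 0 1 ×ˢ Metric.closedBall u r)
  have hKs : K ⊆ s := by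
    rintro _ ⟨⟨t, x⟩, ⟨ht, hx⟩, rfl⟩
    exact hs.mul_mem (hrs hx) ht
  obtain ⟨C, hC⟩ := (isCompact_uIcc.prod (isCompact_closedBall u r)).image
    (continuous_fst.mul continuous_snd) |>.exists_bound_of_continuousOn (hg'.mono hKs)
  have hint : ∀ x ∈ s, IntervalIntegrable (fun t => t ^ k * g (t * x)) MeasureTheory.volume 0 1 :=
    fun x hx => (continuousOn_radialIntegrand hs hg.continuousOn k hx).intervalIntegrable
  refine (hasDerivAt_integral_of_dominated_loc_of_deriv_le (bound := fun _ => C)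
    (F' := fun x t => t ^ (k + 1) * deriv g (t * x)) (Metric.ball_mem_nhds u hr)
    ?_ (hint u hu) ?_ ?_ intervalIntegrable_const ?_).2
  · filter_upwards [hso.mem_nhds hu] with x hx using (hint x hx).def'.aestronglyMeasurable
  · exact (continuousOn_radialIntegrand hs hg' (k + 1) hu).intervalIntegrable.def'
      |>.aestronglyMeasurable
  · filter_upwards with t ht x hx
    have ht' : t ∈ uIcc 0 1 := uIoc_subset_uIcc ht
    have ht1 : |t| ≤ 1 := by
      rw [uIcc_of_le zero_le_one] at ht'; rw [abs_of_nonneg ht'.1]; exact ht'.2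
    rw [norm_mul, norm_pow, Real.norm_eq_abs]
    calc |t| ^ (k + 1) * ‖deriv g (t * x)‖ ≤ 1 * C := by
          gcongr
          · exact pow_le_one₀ (abs_nonneg t) ht1
          · exact hC _ ⟨(t, x), ⟨ht', Metric.ball_subset_closedBall hx⟩, rfl⟩
      _ = C := one_mul C
  · filter_upwards with t ht x hx
    have htx : t * x ∈ s :=
      hs.mul_mem (hrs (Metric.ball_subset_closedBall hx)) (uIoc_subset_uIcc ht)
    have hd := ((hg.differentiableOn one_ne_zero).differentiableAt (hso.mem_nhds htx)).hasDerivAt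
    refine ((hd.comp x ((hasDerivAt_id x).const_mul t)).const_mul (t ^ k)).congr_deriv ?_
    ring

lemma contDiffOn_radialMoment (hso : IsOpen s) (hs : StarConvex ℝ 0 s)
    (hg : ContDiffOn ℝ ∞ g s) (k : ℕ) : ContDiffOn ℝ ∞ (radialMoment g k) s := by
  rw [contDiffOn_infty]
  intro n
  induction n generalizing g k with
  | zero =>
    exact contDiffOn_zero.2 fun u hu =>
      (hasDerivAt_radialMoment hso hs (hg.of_le (by simp)) k hu).continuousAt.continuousWithinAt
  | succ n ih =>
    rw [Nat.cast_succ, contDiffOn_succ_iff_deriv_of_isOpen hso]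
    refine ⟨fun u hu => (hasDerivAt_radialMoment hso hs (hg.of_le (by simp)) k hu)
      |>.differentiableAt.differentiableWithinAt, by simp, ?_⟩
    exact (ih (hg.deriv_of_isOpen hso (m := ∞) (by simp)) (k + 1)).congr fun u hu =>
      (hasDerivAt_radialMoment hso hs (hg.of_le (by simp)) k hu).deriv

lemma sub_eq_mul_radialMoment (hso : IsOpen s) (hs : StarConvex ℝ 0 s)
    (hf : ContDiffOn ℝ 1 f s) (hu : u ∈ s) :
    f u - f 0 = u * radialMoment (deriv f) 0 u := by
  have hd : ∀ t ∈ uIcc (0 : ℝ) 1, HasDerivAt (fun t => f (t * u)) (deriv f (t * u) * u) t :=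
    fun t ht => ((hf.differentiableOn one_ne_zero).differentiableAt
      (hso.mem_nhds (hs.mul_mem hu ht))).hasDerivAt.comp t (hasDerivAt_mul_const u)
  have hint : IntervalIntegrable (fun t => deriv f (t * u) * u) MeasureTheory.volume 0 1 :=
    ((hf.continuousOn_deriv_of_isOpen hso le_rfl).comp (continuousOn_id.mul continuousOn_const)
      (fun _ ht => hs.mul_mem hu ht) |>.mul continuousOn_const).intervalIntegrable
  have hftc := integral_eq_sub_of_hasDerivAt hd hint
  rw [one_mul, zero_mul, intervalIntegral.integral_mul_const] at hftc
  rw [← hftc, radialMoment, mul_comm]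
  simp

lemma exists_sub_eq_sq_mul (hso : IsOpen s) (hs : StarConvex ℝ 0 s) (hf : ContDiffOn ℝ ∞ f s)
    (hf0 : deriv f 0 = 0) :
    ∃ m, ContDiffOn ℝ ∞ m s ∧ m 0 = deriv (deriv f) 0 / 2 ∧ ∀ u ∈ s, f u - f 0 = u ^ 2 * m u := by
  have hf' : ContDiffOn ℝ ∞ (deriv f) s := hf.deriv_of_isOpen hso (m := ∞) (by simp)
  set h := radialMoment (deriv (deriv f)) 0
  have hfh : ∀ u ∈ s, deriv f u = u * h u := fun u hu => by
    simpa [hf0] using sub_eq_mul_radialMoment hso hs (hf'.of_le (by simp)) hu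
  have hh : ContDiffOn ℝ ∞ h s :=
    contDiffOn_radialMoment hso hs (hf'.deriv_of_isOpen hso (m := ∞) (by simp)) 0
  refine ⟨radialMoment h 1, contDiffOn_radialMoment hso hs hh 1, ?_, fun u hu => ?_⟩
  · simp only [h, radialMoment_zero_right]
    norm_num
  · have hmoment : radialMoment (deriv f) 0 u = u * radialMoment h 1 u := by
      rw [radialMoment, radialMoment, ← intervalIntegral.integral_const_mul]
      refine intervalIntegral.integral_congr fun t ht => ?_
      simp only [pow_zero, one_mul, pow_one, hfh _ (hs.mul_mem hu ht)]
      ring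
    rw [sub_eq_mul_radialMoment hso hs (hf.of_le (by simp)) hu, hmoment]
    ring

end Hadamard

section EvenSqrt

lemma deriv_neg_of_even {s : Set ℝ} {φ : ℝ → ℝ} (hs : IsOpen s)
    (heven : ∀ u ∈ s, φ (-u) = φ u) {u : ℝ} (hu : u ∈ s) : deriv φ (-u) = -deriv φ u := by
  have h : (fun v => φ (-v)) =ᶠ[𝓝 u] φ := eventually_of_mem (hs.mem_nhds hu) heven
  have := h.deriv_eq
  rw [deriv_comp_neg] at this
  linarith

lemma hasDerivWithinAt_Ico_of_hasDerivAt {a b : ℝ} {g g' : ℝ → ℝ}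
    (hg : ContinuousOn g (Ico a b)) (hg' : ContinuousOn g' (Ico a b))
    (hd : ∀ x ∈ Ioo a b, HasDerivAt g (g' x) x) {x : ℝ} (hx : x ∈ Ico a b) :
    HasDerivWithinAt g (g' x) (Ico a b) x := by
  rcases hx.1.eq_or_lt with rfl | hax
  · have hlim : Tendsto (deriv g) (𝓝[>] a) (𝓝 (g' a)) := by
      rw [← nhdsWithin_Ioo_eq_nhdsGT hx.2]
      refine ((hg' a hx).mono Ioo_subset_Ico_self).tendsto.congr' ?_
      filter_upwards [self_mem_nhdsWithin] with y hy using (hd y hy).deriv.symm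
    exact (hasDerivWithinAt_Ici_of_tendsto_deriv
      (fun y hy => (hd y hy).differentiableAt.differentiableWithinAt)
      ((hg a hx).mono Ioo_subset_Ico_self) (Ioo_mem_nhdsGT hx.2) hlim).mono Ico_subset_Ici_self
  · exact (hd x ⟨hax, hx.2⟩).hasDerivWithinAt

variable {c : ℝ} {φ : ℝ → ℝ}

lemma sqrt_mem_Ioo (hc : 0 < c) {x : ℝ} (hx : x ∈ Ico 0 (c ^ 2)) : √x ∈ Ioo (-c) c :=
  ⟨(neg_neg_of_pos hc).trans_le (Real.sqrt_nonneg x), (Real.sqrt_lt' hc).2 hx.2⟩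

lemma continuousOn_comp_sqrt (hc : 0 < c) (hφ : ContinuousOn φ (Ioo (-c) c)) :
    ContinuousOn (fun x => φ √x) (Ico 0 (c ^ 2)) :=
  hφ.comp Real.continuous_sqrt.continuousOn fun _ hx => sqrt_mem_Ioo hc hx

lemma exists_even_hasDerivAt_comp_sqrt (hc : 0 < c) (hφ : ContDiffOn ℝ ∞ φ (Ioo (-c) c))
    (heven : ∀ u ∈ Ioo (-c) c, φ (-u) = φ u) :
    ∃ χ : ℝ → ℝ, ContDiffOn ℝ ∞ χ (Ioo (-c) c) ∧ (∀ u ∈ Ioo (-c) c, χ (-u) = χ u) ∧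
      ∀ x ∈ Ioo 0 (c ^ 2), HasDerivAt (fun x => φ √x) (χ √x) x := by
  have h0 : (0 : ℝ) ∈ Ioo (-c) c := ⟨neg_neg_of_pos hc, hc⟩
  have hstar : StarConvex ℝ 0 (Ioo (-c) c) := (convex_Ioo _ _).starConvex h0
  have hφ' : ContDiffOn ℝ ∞ (deriv φ) (Ioo (-c) c) :=
    hφ.deriv_of_isOpen isOpen_Ioo (m := ∞) (by simp)
  have hodd : ∀ u ∈ Ioo (-c) c, deriv φ (-u) = -deriv φ u :=
    fun u hu => deriv_neg_of_even isOpen_Ioo heven hu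
  have hφ'0 : deriv φ 0 = 0 := by linarith [neg_zero (G := ℝ) ▸ hodd 0 h0]
  set m := radialMoment (deriv (deriv φ)) 0
  have hm : ∀ u ∈ Ioo (-c) c, deriv φ u = u * m u := fun u hu => by
    simpa [hφ'0] using sub_eq_mul_radialMoment isOpen_Ioo hstar (hφ'.of_le (by simp)) hu
  have hm_even : ∀ u ∈ Ioo (-c) c, m (-u) = m u := by
    intro u hu
    rcases eq_or_ne u 0 with rfl | hu0
    · rw [neg_zero]
    · have hnu : -u ∈ Ioo (-c) c := ⟨neg_lt_neg hu.2, by linarith [hu.1]⟩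
      have h := hodd u hu
      rw [hm _ hnu, hm u hu] at h
      exact mul_left_cancel₀ (neg_ne_zero.2 hu0) (by linarith)
  refine ⟨fun u => m u / 2,
    (contDiffOn_radialMoment isOpen_Ioo hstar (hφ'.deriv_of_isOpen isOpen_Ioo (m := ∞) (by simp))
      0).div_const 2, fun u hu => by simp only [hm_even u hu], fun x hx => ?_⟩
  have hsx : √x ∈ Ioo (-c) c := sqrt_mem_Ioo hc (Ioo_subset_Ico_self hx)
  have hsx0 : 0 < √x := Real.sqrt_pos.2 hx.1
  have hd := ((hφ.differentiableOn (by simp)).differentiableAt (isOpen_Ioo.mem_nhds hsx))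
    |>.hasDerivAt.comp x (Real.hasDerivAt_sqrt hx.1.ne')
  refine hd.congr_deriv ?_
  rw [hm _ hsx]
  field_simp

lemma contDiffOn_comp_sqrt_of_even (hc : 0 < c) (hφ : ContDiffOn ℝ ∞ φ (Ioo (-c) c))
    (heven : ∀ u ∈ Ioo (-c) c, φ (-u) = φ u) :
    ContDiffOn ℝ ∞ (fun x => φ √x) (Ico 0 (c ^ 2)) := by
  rw [contDiffOn_infty]
  intro n
  induction n generalizing φ with
  | zero => exact contDiffOn_zero.2 (continuousOn_comp_sqrt hc hφ.continuousOn)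
  | succ n ih =>
    obtain ⟨χ, hχ, hχ_even, hχ_deriv⟩ := exists_even_hasDerivAt_comp_sqrt hc hφ heven
    have hD : ∀ x ∈ Ico 0 (c ^ 2), HasDerivWithinAt (fun x => φ √x) (χ √x) (Ico 0 (c ^ 2)) x :=
      fun x hx => hasDerivWithinAt_Ico_of_hasDerivAt (continuousOn_comp_sqrt hc hφ.continuousOn)
        (continuousOn_comp_sqrt hc hχ.continuousOn) hχ_deriv hx
    rw [Nat.cast_succ, contDiffOn_succ_iff_derivWithin (uniqueDiffOn_Ico _ _)]
    exact ⟨fun x hx => (hD x hx).differentiableWithinAt, by simp,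
      (ih hχ hχ_even).congr fun x hx => (hD x hx).derivWithin (uniqueDiffOn_Ico _ _ x hx)⟩

end EvenSqrt

lemma IsPreconnected.pos_of_ne_zero {α : Type*} [TopologicalSpace α] {s : Set α} {f : α → ℝ}
    (hs : IsPreconnected s) (hf : ContinuousOn f s) (hne : ∀ x ∈ s, f x ≠ 0) {a : α} (ha : a ∈ s)
    (hfa : 0 < f a) {x : α} (hx : x ∈ s) : 0 < f x := by
  by_contra! hfx
  obtain ⟨z, hz, hz0⟩ := hs.intermediate_value hx ha hf ⟨hfx, hfa.le⟩
  exact hne z hz hz0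

lemma contDiffAt_comp_invFunOn {U : Set ℝ} {σ ψ : ℝ → ℝ} {n : WithTop ℕ∞} {t : ℝ}
    (hU : IsOpen U) (hinj : InjOn σ U) (ht : t ∈ U) (hσ : ContDiffAt ℝ n σ t)
    (hσ' : deriv σ t ≠ 0) (hψ : ContDiffAt ℝ n ψ t) (hn : n ≠ 0) :
    ContDiffAt ℝ n (fun v => ψ (Function.invFunOn σ U v)) (σ t) := by
  set A : ℝ ≃L[ℝ] ℝ := ContinuousLinearEquiv.unitsEquivAut ℝ (Units.mk0 _ hσ')
  have hA : HasFDerivAt σ (A : ℝ →L[ℝ] ℝ) t := by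
    have hA_eq : (A : ℝ →L[ℝ] ℝ) = .toSpanSingleton ℝ (deriv σ t) := by ext; simp [A]
    rw [hA_eq, ← hasDerivAt_iff_hasFDerivAt]
    exact (hσ.differentiableAt hn).hasDerivAt
  set inv := hσ.localInverse hA hn
  have hinv : ContDiffAt ℝ n inv (σ t) := hσ.to_localInverse hA hn
  have hinv_t : inv (σ t) = t := hσ.localInverse_apply_image hA hn
  have hright : ∀ᶠ v in 𝓝 (σ t), σ (inv v) = v :=
    (hσ.hasStrictFDerivAt' hA hn).eventually_right_inverse
  have hmem : ∀ᶠ v in 𝓝 (σ t), inv v ∈ U :=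
    hinv.continuousAt.eventually_mem (by rw [hinv_t]; exact hU.mem_nhds ht)
  have heq : (fun v => ψ (inv v)) =ᶠ[𝓝 (σ t)] fun v => ψ (Function.invFunOn σ U v) := by
    filter_upwards [hright, hmem] with v hv hvU
    conv_rhs => rw [← hv]
    rw [hinj.leftInvOn_invFunOn hvU]
  have hψ' : ContDiffAt ℝ n ψ (inv (σ t)) := by rwa [hinv_t]
  exact (hψ'.comp _ hinv).congr_of_eventuallyEq heq.symm

section SquareCoordinate

variable {s : Set ℝ} {τ : ℝ → ℝ}

lemma exists_sub_eq_sq_mul_of_pos (hso : IsOpen s) (hs : Convex ℝ s) (h0 : 0 ∈ s)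
    (hτ : ContDiffOn ℝ ∞ τ s) (hτ0 : deriv τ 0 = 0) (hτ0' : 0 < deriv (deriv τ) 0)
    (hτ' : ∀ t ∈ s, t ≠ 0 → deriv τ t ≠ 0) :
    ∃ m, ContDiffOn ℝ ∞ m s ∧ (∀ t ∈ s, 0 < m t) ∧ ∀ t ∈ s, τ t - τ 0 = t ^ 2 * m t := by
  obtain ⟨m, hm, hm0, hτm⟩ := exists_sub_eq_sq_mul hso (hs.starConvex h0) hτ hτ0
  refine ⟨m, hm, fun t ht => hs.isPreconnected.pos_of_ne_zero hm.continuousOn ?_ h0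
    (by rw [hm0]; positivity) ht, hτm⟩
  -- if `m t = 0` then `τ t = τ 0`, and Rolle's theorem gives a critical point between `0` and `t`
  intro t ht hmt
  have hτt : τ t = τ 0 := by linarith [hτm t ht, hmt ▸ mul_zero (t ^ 2)]
  have hsub := hs.ordConnected.out
  rcases lt_trichotomy t 0 with htneg | rfl | htpos
  · obtain ⟨c, hc, hc0⟩ := exists_deriv_eq_zero htneg (hτ.continuousOn.mono (hsub ht h0)) hτt
    exact hτ' c (hsub ht h0 (Ioo_subset_Icc_self hc)) hc.2.ne hc0
  · rw [hm0] at hmt; linarith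
  · obtain ⟨c, hc, hc0⟩ := exists_deriv_eq_zero htpos (hτ.continuousOn.mono (hsub h0 ht)) hτt.symm
    exact hτ' c (hsub h0 ht (Ioo_subset_Icc_self hc)) hc.1.ne' hc0

lemma exists_sq_coordinate (hso : IsOpen s) (hs : Convex ℝ s) (h0 : 0 ∈ s)
    (hτ : ContDiffOn ℝ ∞ τ s) (hτ0 : deriv τ 0 = 0) (hτ0' : 0 < deriv (deriv τ) 0)
    (hτ' : ∀ t ∈ s, t ≠ 0 → deriv τ t ≠ 0) :
    ∃ σ : ℝ → ℝ, ContDiffOn ℝ ∞ σ s ∧ σ 0 = 0 ∧ (∀ t ∈ s, 0 < deriv σ t) ∧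
      ∀ t ∈ s, τ t - τ 0 = σ t ^ 2 := by
  obtain ⟨m, hm, hm_pos, hτm⟩ := exists_sub_eq_sq_mul_of_pos hso hs h0 hτ hτ0 hτ0' hτ'
  have hsqrt : ContDiffOn ℝ ∞ (fun t => √(m t)) s := hm.sqrt fun t ht => (hm_pos t ht).ne'
  set σ := fun t => t * √(m t)
  have hσ : ContDiffOn ℝ ∞ σ s := contDiffOn_id.mul hsqrt
  have hτσ : ∀ t ∈ s, τ t - τ 0 = σ t ^ 2 := fun t ht => by
    rw [hτm t ht, mul_pow, Real.sq_sqrt (hm_pos t ht).le]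
  have hσ'0 : 0 < deriv σ 0 := by
    have hd : HasDerivAt σ _ 0 := (hasDerivAt_id 0).mul
      ((hsqrt.differentiableOn (by simp)).differentiableAt (hso.mem_nhds h0)).hasDerivAt
    rw [hd.deriv, one_mul, zero_mul, add_zero]
    exact Real.sqrt_pos.2 (hm_pos 0 h0)
  refine ⟨σ, hσ, zero_mul _, fun t ht => hs.isPreconnected.pos_of_ne_zero
    (hσ.continuousOn_deriv_of_isOpen hso (by simp)) ?_ h0 hσ'0 ht, hτσ⟩
  -- away from `0`, `τ' = 2 σ σ'` does not vanish
  intro t ht hσt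
  rcases eq_or_ne t 0 with rfl | ht0
  · exact hσ'0.ne' hσt
  refine hτ' t ht ht0 ?_
  have hτ_eq : τ =ᶠ[𝓝 t] fun v => σ v ^ 2 + τ 0 :=
    eventually_of_mem (hso.mem_nhds ht) fun v hv => by linarith [hτσ v hv]
  have hd := ((hσ.differentiableOn (by simp)).differentiableAt (hso.mem_nhds ht)).hasDerivAt
  have hd2 : HasDerivAt (fun v => σ v ^ 2 + τ 0) _ t := (hd.pow 2).add_const (τ 0)
  rw [hτ_eq.deriv_eq, hd2.deriv, hσt, mul_zero]

end SquareCoordinate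

lemma contDiffOn_Ioo_and_even_of_pairs {J : Set ℝ} {φ σ ψ : ℝ → ℝ} {c : ℝ}
    (hφσ : ∀ t ∈ J, φ (σ t) = ψ t) (hφ : ∀ t ∈ J, ContDiffAt ℝ ∞ φ (σ t))
    (hpair : ∀ u ∈ Ico 0 c, ∃ t ∈ J, ∃ t' ∈ J, σ t = u ∧ σ t' = -u ∧ ψ t' = ψ t) :
    ContDiffOn ℝ ∞ φ (Ioo (-c) c) ∧ ∀ u ∈ Ioo (-c) c, φ (-u) = φ u := by
  have key : ∀ u ∈ Ioo (-c) c, ∃ t ∈ J, ∃ t' ∈ J, σ t = u ∧ σ t' = -u ∧ ψ t' = ψ t := by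
    intro u hu
    obtain ⟨t, ht, t', ht', hσt, hσt', hψ⟩ := hpair |u| ⟨abs_nonneg u, abs_lt.2 hu⟩
    rcases abs_choice u with h | h
    · exact ⟨t, ht, t', ht', h ▸ hσt, h ▸ hσt', hψ⟩
    · exact ⟨t', ht', t, ht, by rw [hσt', h, neg_neg], by rw [hσt, h], hψ.symm⟩
  refine ⟨fun u hu => ?_, fun u hu => ?_⟩ <;> obtain ⟨t, ht, t', ht', hσt, hσt', hψ⟩ := key u hu
  · rw [← hσt]
    exact (hφ t ht).contDiffWithinAt
  · rw [← hσt', ← hσt, hφσ t ht, hφσ t' ht', hψ]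

section EvenReparametrization

variable {δ ε : ℝ} {σ ψ : ℝ → ℝ}

lemma exists_pair_of_mem_Ico (hδ : 0 < δ) (hσ : ContinuousOn σ (Ioo (-δ) ε))
    (hmono : StrictMonoOn σ (Ioo (-δ) ε)) (hσ0 : σ 0 = 0)
    (hsymm : ∀ t ∈ Ioo 0 ε, ∃ t' ∈ Ioo (-δ) 0, σ t' ^ 2 = σ t ^ 2 ∧ ψ t' = ψ t)
    {t₁ : ℝ} (ht₁ : t₁ ∈ Ioo 0 ε) {u : ℝ} (hu : u ∈ Ico 0 (σ t₁)) :
    ∃ t ∈ Ioo (-δ) ε, ∃ t' ∈ Ioo (-δ) ε, σ t = u ∧ σ t' = -u ∧ ψ t' = ψ t := by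
  have hJ : Icc 0 t₁ ⊆ Ioo (-δ) ε := Icc_subset_Ioo (neg_neg_of_pos hδ) ht₁.2
  obtain ⟨t, ht, rfl⟩ := intermediate_value_Ico ht₁.1.le (hσ.mono hJ) (hσ0 ▸ hu)
  rcases ht.1.eq_or_lt with rfl | htpos
  · exact ⟨0, hJ (left_mem_Icc.2 ht₁.1.le), 0, hJ (left_mem_Icc.2 ht₁.1.le), rfl,
      by rw [hσ0, neg_zero], rfl⟩
  obtain ⟨t', ht', hsq, hψ⟩ := hsymm t ⟨htpos, ht.2.trans ht₁.2⟩
  have ht'J : t' ∈ Ioo (-δ) ε := ⟨ht'.1, ht'.2.trans (htpos.trans (ht.2.trans ht₁.2))⟩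
  have hneg : σ t' < 0 := hσ0 ▸ hmono ht'J (hJ (left_mem_Icc.2 ht₁.1.le)) ht'.2
  have hpos : 0 < σ t :=
    hσ0 ▸ hmono (hJ (left_mem_Icc.2 ht₁.1.le)) (hJ (Ico_subset_Icc_self ht)) htpos
  refine ⟨t, hJ (Ico_subset_Icc_self ht), t', ht'J, rfl, ?_, hψ⟩
  rcases sq_eq_sq_iff_eq_or_eq_neg.1 hsq with h | h
  · linarith
  · exact h

lemma exists_contDiffOn_comp_sq (hδ : 0 < δ) (hσ : ContDiffOn ℝ ∞ σ (Ioo (-δ) ε))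
    (hσ' : ∀ t ∈ Ioo (-δ) ε, 0 < deriv σ t) (hσ0 : σ 0 = 0) (hψ : ContDiffOn ℝ ∞ ψ (Ioo (-δ) ε))
    (hsymm : ∀ t ∈ Ioo 0 ε, ∃ t' ∈ Ioo (-δ) 0, σ t' ^ 2 = σ t ^ 2 ∧ ψ t' = ψ t) :
    ∃ F : ℝ → ℝ, ContDiffOn ℝ ∞ F ((fun t => σ t ^ 2) '' Ico 0 ε) ∧
      ∀ t ∈ Ico 0 ε, ψ t = F (σ t ^ 2) := by
  have hmono : StrictMonoOn σ (Ioo (-δ) ε) :=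
    strictMonoOn_of_deriv_pos (convex_Ioo _ _) hσ.continuousOn (by rwa [interior_Ioo])
  set φ := fun u => ψ (Function.invFunOn σ (Ioo (-δ) ε) u)
  have hφσ : ∀ t ∈ Ioo (-δ) ε, φ (σ t) = ψ t := fun t ht => by
    simp only [φ, hmono.injOn.leftInvOn_invFunOn ht]
  have hφ : ∀ t ∈ Ioo (-δ) ε, ContDiffAt ℝ ∞ φ (σ t) := fun t ht =>
    contDiffAt_comp_invFunOn isOpen_Ioo hmono.injOn ht (hσ.contDiffAt (isOpen_Ioo.mem_nhds ht))
      (hσ' t ht).ne' (hψ.contDiffAt (isOpen_Ioo.mem_nhds ht)) (by simp)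
  have hIco : ∀ t ∈ Ico 0 ε, t ∈ Ioo (-δ) ε := fun t ht => ⟨(neg_neg_of_pos hδ).trans_le ht.1, ht.2⟩
  have hσ_nonneg : ∀ t ∈ Ico 0 ε, 0 ≤ σ t := fun t ht => by
    rcases ht.1.eq_or_lt with rfl | htpos
    · exact hσ0.ge
    · exact hσ0 ▸ (hmono (hIco 0 ⟨le_rfl, htpos.trans ht.2⟩) (hIco t ht) htpos).le
  refine ⟨fun x => φ √x, contDiffOn_of_locally_contDiffOn ?_, fun t ht => ?_⟩
  · rintro _ ⟨t, ht, rfl⟩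
    obtain ⟨t₁, htt₁, ht₁ε⟩ := exists_between ht.2
    have ht₁ : t₁ ∈ Ioo 0 ε := ⟨ht.1.trans_lt htt₁, ht₁ε⟩
    have hlt : σ t < σ t₁ := hmono (hIco t ht) (hIco t₁ ⟨ht₁.1.le, ht₁ε⟩) htt₁
    obtain ⟨hφc, hφeven⟩ := contDiffOn_Ioo_and_even_of_pairs hφσ hφ fun u hu =>
      exists_pair_of_mem_Ico hδ hσ.continuousOn hmono hσ0 hsymm ht₁ hu
    refine ⟨Iio (σ t₁ ^ 2), isOpen_Iio, pow_lt_pow_left₀ hlt (hσ_nonneg t ht) two_ne_zero,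
      (contDiffOn_comp_sqrt_of_even ((hσ_nonneg t ht).trans_lt hlt) hφc hφeven).mono ?_⟩
    rintro _ ⟨⟨t', -, rfl⟩, hlt'⟩
    exact ⟨sq_nonneg _, hlt'⟩
  · simp only [Real.sqrt_sq (hσ_nonneg t ht), hφσ t (hIco t ht)]

end EvenReparametrization

theorem exists_contDiffOn_extension_of_pos {δ ε : ℝ} (hδ : 0 < δ) (hε : 0 < ε) {τ ψ : ℝ → ℝ}
    (hτ : ContDiffOn ℝ ∞ τ (Ioo (-δ) ε)) (hψ : ContDiffOn ℝ ∞ ψ (Ioo (-δ) ε))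
    (h0 : deriv τ 0 = 0) (hpos : 0 < deriv (deriv τ) 0)
    (hne : ∀ t ∈ Ioo (-δ) 0 ∪ Ioo 0 ε, deriv τ t ≠ 0) {I : Set ℝ}
    (hI1 : τ '' Ioo (-δ) 0 = I) (hI2 : τ '' Ioo 0 ε = I) {G : ℝ → ℝ}
    (hG : ∀ t ∈ Ioo (-δ) 0 ∪ Ioo 0 ε, ψ t = G (τ t)) :
    ∃ Gext : ℝ → ℝ, ContDiffOn ℝ ∞ Gext (I ∪ {τ 0}) ∧ EqOn Gext G I := by
  have h0J : (0 : ℝ) ∈ Ioo (-δ) ε := ⟨neg_neg_of_pos hδ, hε⟩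
  have hsub_neg : Ioo (-δ) 0 ⊆ Ioo (-δ) ε := Ioo_subset_Ioo_right hε.le
  have hsub_pos : Ioo 0 ε ⊆ Ioo (-δ) ε := Ioo_subset_Ioo_left h0J.1.le
  obtain ⟨σ, hσ, hσ0, hσ', hτσ⟩ := exists_sq_coordinate isOpen_Ioo (convex_Ioo _ _) h0J hτ h0 hpos
    fun t ht ht0 => hne t <| (ht0.lt_or_gt).imp (fun h => ⟨ht.1, h⟩) (fun h => ⟨h, ht.2⟩)
  obtain ⟨F, hF, hψF⟩ := exists_contDiffOn_comp_sq hδ hσ hσ' hσ0 hψ fun t ht => by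
    obtain ⟨t', ht', hτt'⟩ : τ t ∈ τ '' Ioo (-δ) 0 := hI1 ▸ hI2 ▸ mem_image_of_mem τ ht
    refine ⟨t', ht', ?_, ?_⟩
    · rw [← hτσ t' (hsub_neg ht'), ← hτσ t (hsub_pos ht), hτt']
    · rw [hG t' (Or.inl ht'), hG t (Or.inr ht), hτt']
  have hIτ : I ∪ {τ 0} = τ '' Ico 0 ε := by
    rw [← hI2, ← Ioo_insert_left hε, image_insert_eq, insert_eq, union_comm]
  refine ⟨fun s => F (s - τ 0), hF.comp (contDiffOn_id.sub contDiffOn_const) ?_, ?_⟩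
  · rw [hIτ]
    rintro _ ⟨t, ht, rfl⟩
    exact ⟨t, ht, (hτσ t ⟨h0J.1.trans_le ht.1, ht.2⟩).symm⟩
  · rw [← hI2]
    rintro _ ⟨t, ht, rfl⟩
    simp only [hτσ t (hsub_pos ht), ← hψF t (Ioo_subset_Ico_self ht), hG t (Or.inr ht)]

/-- Lemma 1 of the paper. Let `δ, ε > 0` and let
`τ, ψ : (−δ, ε) → ℝ` be `C^∞` functions such that
(a) `τ'(0) = 0 ≠ τ''(0)` and `τ'·τ'' ≠ 0` everywhere on `(−δ,0) ∪ (0,ε)`;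
(b) the restrictions of `τ` to `(−δ,0)` and `(0,ε)` have the same range `I`;
(c) `ψ(t) = G(τ(t))` for some `G : I → ℝ` and all `t ∈ (−δ,0) ∪ (0,ε)`.
Then `G` admits a `C^∞` extension to the half-open interval `I ∪ {τ 0}`. -/
theorem stmt_0 (δ ε : ℝ) (hδ : 0 < δ) (hε : 0 < ε)
    (τ ψ : ℝ → ℝ)
    (hτ : ContDiffOn ℝ (⊤ : ℕ∞) τ (Ioo (-δ) ε))
    (hψ : ContDiffOn ℝ (⊤ : ℕ∞) ψ (Ioo (-δ) ε))
    (h0 : deriv τ 0 = 0) (h0' : deriv (deriv τ) 0 ≠ 0)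
    (hne : ∀ t ∈ Ioo (-δ) 0 ∪ Ioo 0 ε, deriv τ t * deriv (deriv τ) t ≠ 0)
    (I : Set ℝ)
    (hI1 : τ '' Ioo (-δ) 0 = I) (hI2 : τ '' Ioo 0 ε = I)
    (G : ℝ → ℝ)
    (hG : ∀ t ∈ Ioo (-δ) 0 ∪ Ioo 0 ε, ψ t = G (τ t)) :
    ∃ Gext : ℝ → ℝ, ContDiffOn ℝ (⊤ : ℕ∞) Gext (I ∪ {τ 0}) ∧ EqOn Gext G I := by
  have hne' : ∀ t ∈ Ioo (-δ) 0 ∪ Ioo 0 ε, deriv τ t ≠ 0 :=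
    fun t ht => left_ne_zero_of_mul (hne t ht)
  rcases h0'.lt_or_gt with hneg | hpos
  · -- apply the case `τ''(0) > 0` to `-τ`, `-I` and `G (-·)`
    have hI1' : (-τ) '' Ioo (-δ) 0 = Neg.neg '' I := by rw [← hI1, image_image]; rfl
    have hI2' : (-τ) '' Ioo 0 ε = Neg.neg '' I := by rw [← hI2, image_image]; rfl
    obtain ⟨H, hH, hHG⟩ := exists_contDiffOn_extension_of_pos hδ hε hτ.neg hψ (by simp [h0])
      (by simpa using hneg) (fun t ht => by simpa using hne' t ht) hI1' hI2'
      (G := fun s => G (-s)) (fun t ht => by simpa using hG t ht)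
    refine ⟨fun s => H (-s), hH.comp contDiff_neg.contDiffOn ?_,
      fun s hs => by simpa using hHG (mem_image_of_mem Neg.neg hs)⟩
    rintro s (hs | rfl)
    · exact Or.inl (mem_image_of_mem _ hs)
    · exact Or.inr rfl
  · exact exists_contDiffOn_extension_of_pos hδ hε hτ hψ h0 hpos hne' hI1 hI2 hG
end

section
/- On a Kähler manifold (M, g) with complex structure J, for any real-holomorphic vector field v on M and any C² function ψ : M → ℝ, one has 2·ι_v(i∂∂̄ψ) = d(d_{Jv}ψ) − [d(d_vψ)]∘J, where [μ]∘J denotes the 1-form x ↦ μ_x ∘ J_x. -/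
/-- An algebraic (Koszul-style) model of the smooth geometry of a Riemannian
manifold `(M,g)` (assumed parallelizable when a `Frame` is used).  Here `A`
plays the role of the commutative `ℝ`-algebra `C^∞(M)` of smooth real-valued
functions, `V` plays the role of the `C^∞(M)`-module of smooth vector fields,
`act w f` is the directional derivative `d_w f = (df)(w)` of the function `f`
along the vector field `w`, `g` is the Riemannian metric, and `conn` is its
Levi-Civita connection (so `conn u w = ∇_u w`): it is `A`-linear in the first
slot, satisfies the Leibniz rule in the second slot, is torsion-free and
compatible with `g`. -/
structure GeomSetup (A : Type*) [CommRing A] [Algebra ℝ A]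
    (V : Type*) [AddCommGroup V] [Module A V] where
  act : V → A → A
  act_addv : ∀ u w f, act (u + w) f = act u f + act w f
  act_smulv : ∀ (a : A) (w : V) (f : A), act (a • w) f = a * act w f
  act_addf : ∀ (w : V) (f₁ f₂ : A), act w (f₁ + f₂) = act w f₁ + act w f₂
  act_mulf : ∀ (w : V) (f₁ f₂ : A), act w (f₁ * f₂) = act w f₁ * f₂ + f₁ * act w f₂
  act_const : ∀ (w : V) (r : ℝ), act w (algebraMap ℝ A r) = 0
  g : V → V → A
  g_symm : ∀ u w, g u w = g w u
  g_addl : ∀ u₁ u₂ w, g (u₁ + u₂) w = g u₁ w + g u₂ w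
  g_smull : ∀ (a : A) (u w : V), g (a • u) w = a * g u w
  conn : V → V → V
  conn_addl : ∀ u₁ u₂ w, conn (u₁ + u₂) w = conn u₁ w + conn u₂ w
  conn_smull : ∀ (a : A) (u w : V), conn (a • u) w = a • conn u w
  conn_addr : ∀ u w₁ w₂, conn u (w₁ + w₂) = conn u w₁ + conn u w₂
  conn_leibniz : ∀ (u : V) (a : A) (w : V), conn u (a • w) = act u a • w + a • conn u w
  torsion_free : ∀ u w f,
    act (conn u w - conn w u) f = act u (act w f) - act w (act u f)
  compat : ∀ x u w, act x (g u w) = g (conn x u) w + g u (conn x w)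

namespace GeomSetup

variable {A : Type*} [CommRing A] [Algebra ℝ A]
variable {V : Type*} [AddCommGroup V] [Module A V]

/-- The Hessian `∇dτ` of a function `τ`. -/
def hess (S : GeomSetup A V) (τ : A) (u w : V) : A :=
  S.act u (S.act w τ) - S.act (S.conn u w) τ

/-- The exterior derivative of a `2`-form `η` (using that the Lie bracket of
vector fields is `⁅u,v⁆ = ∇_u v − ∇_v u` for the torsion-free connection). -/
def dtwo (S : GeomSetup A V) (η : V → V → A) (u v w : V) : A :=
  S.act u (η v w) - S.act v (η u w) + S.act w (η u v)
    - η (S.conn u v - S.conn v u) w + η (S.conn u w - S.conn w u) v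
    - η (S.conn v w - S.conn w v) u

/-- A global frame `e` for the vector fields, with coordinate functions
`coord` (the dual coframe); its existence encodes that `V` is a free module of
rank `n`, i.e. that the tangent bundle is trivialized; for a Kähler *surface*
one takes `n = 4`. -/
structure Frame (S : GeomSetup A V) (n : ℕ) where
  e : Fin n → V
  coord : Fin n → V → A
  coord_addv : ∀ i u w, coord i (u + w) = coord i u + coord i w
  coord_smulv : ∀ (i : Fin n) (a : A) (w : V), coord i (a • w) = a * coord i w
  coord_e : ∀ i j, coord i (e j) = if i = j then 1 else 0
  repr : ∀ w, w = ∑ i, coord i w • e i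

variable {S : GeomSetup A V} {n : ℕ}

/-- The trace (over `C^∞(M)`) of a bundle morphism `B : TM → TM`. -/
def Frame.trEnd (F : S.Frame n) (B : V → V) : A :=
  ∑ i, F.coord i (B (F.e i))

/-- The divergence `div w = tr ∇w` of a vector field. In particular
`divv (∇τ)` is the Laplacian `Δτ`. -/
def Frame.divv (F : S.Frame n) (w : V) : A :=
  ∑ i, F.coord i (S.conn (F.e i) w)

/-- The divergence (a `1`-form) of a bundle morphism `B : TM → TM`:
`(div B)(w) = tr (x ↦ (∇_x B)(w))`. -/
def Frame.divEnd (F : S.Frame n) (B : V → V) (w : V) : A :=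
  ∑ i, F.coord i (S.conn (F.e i) (B w) - B (S.conn (F.e i) w))

/-- A Kähler structure on `S`: a parallel orthogonal almost complex
structure `J`. -/
structure Kahler (S : GeomSetup A V) where
  J : V → V
  J_addv : ∀ u w, J (u + w) = J u + J w
  J_smulv : ∀ (a : A) (w : V), J (a • w) = a • J w
  J_sq : ∀ w, J (J w) = -w
  J_isometry : ∀ u w, S.g (J u) (J w) = S.g u w
  J_parallel : ∀ u w, S.conn u (J w) = J (S.conn u w)

/-- The Kähler form `ω = g(J·,·)`. -/
def Kahler.kform (K : Kahler S) (u w : V) : A := S.g (K.J u) w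

/-- The `2`-form `2 i ∂∂̄ψ = (∇dψ)(J·,·) − (∇dψ)(·,J·)`. -/
def Kahler.twoddbar (K : Kahler S) (ψ : A) (u w : V) : A :=
  S.hess ψ (K.J u) w - S.hess ψ u (K.J w)

/-- Composition with smooth functions `ℝ → ℝ`: `comp G f` models the smooth
function `G ∘ f` of `f`; it satisfies the chain rule and is compatible with
constants, the identity, sums and products. -/
structure CompStr (S : GeomSetup A V) where
  comp : (ℝ → ℝ) → A → A
  comp_chain : ∀ (G : ℝ → ℝ), ContDiff ℝ (⊤ : ℕ∞) G → ∀ (f : A) (w : V),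
    S.act w (comp G f) = comp (deriv G) f * S.act w f
  comp_const : ∀ (r : ℝ) (f : A), comp (fun _ => r) f = algebraMap ℝ A r
  comp_id : ∀ f : A, comp (fun t => t) f = f
  comp_add : ∀ (G₁ G₂ : ℝ → ℝ) (f : A),
    comp (fun t => G₁ t + G₂ t) f = comp G₁ f + comp G₂ f
  comp_mul : ∀ (G₁ G₂ : ℝ → ℝ) (f : A),
    comp (fun t => G₁ t * G₂ t) f = comp G₁ f * comp G₂ f

/-- The twice-covariant symmetric tensor field
`ĝ = f g − θ (dτ ⊗ dτ + ξ ⊗ ξ)`, where `ξ = g(Jv,·)` (a special biconformal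
change of `g`, when it is a Kähler metric). -/
def ghat (S : GeomSetup A V) (K : Kahler S) (τ f θ : A) (v : V) (x y : V) : A :=
  f * S.g x y - θ * (S.act x τ * S.act y τ + S.g (K.J v) x * S.g (K.J v) y)

/-- The wedge product of two `2`-forms (a `4`-form, shuffle convention). -/
def wedgeTwoTwo (s t : V → V → A) (x₁ x₂ x₃ x₄ : V) : A :=
  s x₁ x₂ * t x₃ x₄ - s x₁ x₃ * t x₂ x₄ + s x₁ x₄ * t x₂ x₃
    + s x₂ x₃ * t x₁ x₄ - s x₂ x₄ * t x₁ x₃ + s x₃ x₄ * t x₁ x₂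

end GeomSetup

/-- Lemma 2 of the paper. In a Kähler manifold `(M,g)` one
has `2 ι_v(i∂∂̄ψ) = d(d_{Jv}ψ) − [d(d_vψ)]∘J` for any real-holomorphic vector
field `v` and any function `ψ : M → ℝ`.  Here real-holomorphicity of `v` means
`[J, ∇v] = 0`, and `2 i∂∂̄ψ = (∇dψ)(J·,·) − (∇dψ)(·,J·)`. -/
theorem stmt_3
    {A : Type*} [CommRing A] [Algebra ℝ A] {V : Type*} [AddCommGroup V] [Module A V]
    (S : GeomSetup A V) (K : GeomSetup.Kahler S)
    (v : V) (hhol : ∀ w, K.J (S.conn w v) = S.conn (K.J w) v)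
    (ψ : A) :
    ∀ w, K.twoddbar ψ v w
      = S.act w (S.act (K.J v) ψ) - S.act (K.J w) (S.act v ψ) := by
  intro w
  have hsub : ∀ (u w : V) (f : A), S.act (u - w) f = S.act u f - S.act w f := by
    intro u w f
    rw [sub_eq_add_neg, ← neg_one_smul A w, S.act_addv, S.act_smulv]
    ring
  have h1 := S.torsion_free (K.J v) w ψ
  have h2 := S.torsion_free v (K.J w) ψ
  rw [hsub] at h1 h2
  have h3 : S.conn w (K.J v) = S.conn (K.J w) v := by
    rw [K.J_parallel, hhol]
  unfold GeomSetup.Kahler.twoddbar GeomSetup.hess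
  rw [h3] at h1
  linear_combination h2 - h1
end

section
/- Let (M, g) and (M, ĝ) be Kähler metrics on a complex manifold M whose Kähler forms satisfy ω̂ = ω + 2i∂∂̄ψ for a C^∞ function ψ : M → ℝ. Let τ : M → ℝ be C^∞ with real-holomorphic g-gradient v = ∇τ. If d_{Jv}ψ = 0, then v is the ĝ-gradient of the function τ̂ = τ + d_vψ. -/
/-- Lemma 3 of the paper. Let `g` and `ĝ` be Kähler metrics
on a complex manifold `M` whose Kähler forms satisfy `ω̂ = ω + 2i∂∂̄ψ`, i.e.
`ĝ(J·,·) = g(J·,·) + 2i∂∂̄ψ`, for a smooth function `ψ`.  If the `g`-gradient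
`v = ∇τ` of a smooth function `τ` is real-holomorphic and `d_{Jv}ψ = 0`, then
`v` is also the `ĝ`-gradient of `τ̂ = τ + d_vψ`. -/
theorem stmt_4
    {A : Type*} [CommRing A] [Algebra ℝ A] {V : Type*} [AddCommGroup V] [Module A V]
    (S : GeomSetup A V) (K : GeomSetup.Kahler S)
    (gh : V → V → A)
    (ghsymm : ∀ u w, gh u w = gh w u)
    (ghherm : ∀ u w, gh (K.J u) (K.J w) = gh u w)
    (ψ τ : A) (v : V)
    (hv : ∀ w, S.g v w = S.act w τ)
    (hhol : ∀ w, K.J (S.conn w v) = S.conn (K.J w) v)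
    (hkf : ∀ u w, gh (K.J u) w = S.g (K.J u) w + K.twoddbar ψ u w)
    (hJvψ : S.act (K.J v) ψ = 0) :
    ∀ w, gh v w = S.act w (τ + S.act v ψ) := by
  intro w
  have Jneg : ∀ x : V, K.J (-x) = - K.J x := by
    intro x
    have h := K.J_smulv (-1 : A) x
    simpa [neg_one_smul] using h
  have actneg : ∀ (x : V) (f : A), S.act (-x) f = - S.act x f := by
    intro x f
    have h := S.act_smulv (-1 : A) x f
    simpa [neg_one_smul, neg_one_mul] using h
  have actsub : ∀ (x y : V) (f : A), S.act (x - y) f = S.act x f - S.act y f := by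
    intro x y f
    rw [sub_eq_add_neg, S.act_addv, actneg, sub_eq_add_neg]
  have actzero : ∀ x : V, S.act x (0 : A) = 0 := by
    intro x
    simpa using S.act_const x 0
  have connneg : ∀ x y : V, S.conn (-x) y = - S.conn x y := by
    intro x y
    have h := S.conn_smull (-1 : A) x y
    simpa [neg_one_smul] using h
  have hess_symm : ∀ (f : A) (u x : V), S.hess f u x = S.hess f x u := by
    intro f u x
    have h := S.torsion_free u x f
    rw [actsub] at h
    unfold GeomSetup.hess
    linear_combination -h
  have hess_neg : ∀ (f : A) (u x : V), S.hess f (-u) x = - S.hess f u x := by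
    intro f u x
    unfold GeomSetup.hess
    rw [actneg, connneg, actneg]
    ring
  -- key: hess ψ (Jv) (Jw) = act (conn w v) ψ
  have key : S.hess ψ (K.J v) (K.J w) = S.act (S.conn w v) ψ := by
    rw [hess_symm]
    unfold GeomSetup.hess
    rw [hJvψ, actzero, K.J_parallel, ← hhol w, K.J_sq, actneg]
    ring
  have hvJJ : K.J (-(K.J v)) = v := by rw [Jneg, K.J_sq, neg_neg]
  have h1 : gh v w = S.g v w + K.twoddbar ψ (-(K.J v)) w := by
    rw [← hvJJ, hkf, hvJJ]
  rw [h1, hv]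
  unfold GeomSetup.Kahler.twoddbar
  rw [hvJJ, hess_neg, key]
  have h2 : S.hess ψ v w = S.act w (S.act v ψ) - S.act (S.conn w v) ψ := by
    rw [hess_symm]; rfl
  rw [h2, S.act_addf]
  ring
end

section
/- Let Y : ℝ → ℝ be a continuous function and Z an antiderivative of Y, with ζ = e^Z integrable on ℝ. Let W : ℝ → ℝ be continuous with ζW integrable. If θ : ℝ → ℝ is a bounded C¹ solution of θ' + θY = W, then ∫_{−∞}^{∞} ζ(t)W(t) dt = 0. -/
open MeasureTheory Real

/-!
`ζ = e^Z` is an integrating factor: `(ζθ)' = ζ(θ' + θY) = ζW`. Since `θ` is bounded and `ζ` is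
integrable, `ζθ` is integrable, and an integrable function on `ℝ` with integrable derivative has
limit `0` at `±∞`, so the integral of its derivative vanishes.
-/

theorem hasDerivAt_exp_mul_of_hasDerivAt_sub_mul {Z θ : ℝ → ℝ} {t y w : ℝ}
    (hZ : HasDerivAt Z y t) (hθ : HasDerivAt θ (w - θ t * y) t) :
    HasDerivAt (fun s => exp (Z s) * θ s) (exp (Z t) * w) t :=
  (hZ.exp.mul hθ).congr_deriv (by ring)

theorem stmt_11_general (Y Z W θ : ℝ → ℝ)
    (hZ : ∀ t, HasDerivAt Z (Y t) t)
    (hζ : Integrable (fun t => exp (Z t)))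
    (hζW : Integrable (fun t => exp (Z t) * W t))
    (hθ : ∀ t, HasDerivAt θ (W t - θ t * Y t) t)
    (hbd : ∃ C, ∀ t, |θ t| ≤ C) :
    ∫ t, exp (Z t) * W t = 0 := by
  obtain ⟨C, hC⟩ := hbd
  have hθ_cont : Continuous θ := continuous_iff_continuousAt.2 fun t => (hθ t).continuousAt
  have hζθ : Integrable (fun t => exp (Z t) * θ t) :=
    hζ.mul_bdd hθ_cont.aestronglyMeasurable (.of_forall fun t => by simpa using hC t)
  exact integral_eq_zero_of_hasDerivAt_of_integrable
    (fun t => hasDerivAt_exp_mul_of_hasDerivAt_sub_mul (hZ t) (hθ t)) hζW hζθ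

/-- Section 13 of the paper, necessity of (13.2).
Let `Y : ℝ → ℝ` be continuous, `Z` an antiderivative of `Y`, `ζ = e^Z`
integrable on `ℝ`, and `W : ℝ → ℝ` continuous with `ζW` integrable.  If
`θ : ℝ → ℝ` is a bounded `C¹` solution of `θ' + θY = W`, then
`∫_{−∞}^{∞} ζ(t)W(t) dt = 0`. -/
theorem stmt_11 (Y Z W θ : ℝ → ℝ)
    (hY : Continuous Y) (hW : Continuous W)
    (hZ : ∀ t, HasDerivAt Z (Y t) t)
    (hζ : Integrable (fun t => exp (Z t)))
    (hζW : Integrable (fun t => exp (Z t) * W t))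
    (hθ : ∀ t, HasDerivAt θ (W t - θ t * Y t) t)
    (hbd : ∃ C, ∀ t, |θ t| ≤ C) :
    ∫ t, exp (Z t) * W t = 0 :=
  stmt_11_general Y Z W θ hZ hζ hζW hθ hbd
end

section
/- Let (M,g) be a Kähler surface with Kähler form ω and complex structure J, v a vector field, and A : TM → TM a bundle morphism commuting with J and self-adjoint with respect to g at every point. Set ζ = g(JA·,·), α = g(v,·), ξ = g(Jv,·). Then 4 ζ ∧ α ∧ ξ = [(tr_ℝ A)·g(v,v) − 2g(Av,v)]·ω ∧ ω. -/
/-!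
A `J`-adapted orthonormal basis `(e, J e, f, J f)` identifies the tangent space with `ℝ⁴`, carrying
`J` to the standard complex structure `J₀`. A symmetric matrix commuting with `J₀` has only four
free entries, and in these coordinates both sides become the same polynomial in those entries
and in the coordinates of `v, x₁, …, x₄`.
-/

open RealInnerProductSpace

/-- The wedge product of two `1`-forms (shuffle convention). -/
def wedge11 {E : Type*} (a b : E → ℝ) (x y : E) : ℝ := a x * b y - a y * b x

/-- The wedge product of two `2`-forms, a `4`-form (shuffle convention). -/
def wedge22 {E : Type*} (s t : E → E → ℝ) (x₁ x₂ x₃ x₄ : E) : ℝ :=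
  s x₁ x₂ * t x₃ x₄ - s x₁ x₃ * t x₂ x₄ + s x₁ x₄ * t x₂ x₃
    + s x₂ x₃ * t x₁ x₄ - s x₂ x₄ * t x₁ x₃ + s x₃ x₄ * t x₁ x₂

open Matrix

def standardComplexStructure : Matrix (Fin 4) (Fin 4) ℝ :=
  !![0, -1, 0, 0; 1, 0, 0, 0; 0, 0, 0, -1; 0, 0, 1, 0]

local notation "J₀" => standardComplexStructure

/- `M` is the realification of the Hermitian matrix `((p, c - i d), (c + i d, q))` in the real
basis `(e₁, i e₁, e₂, i e₂)` of `ℂ²`. -/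
theorem exists_eq_of_isHermitian_of_commute {M : Matrix (Fin 4) (Fin 4) ℝ} (hM : M.IsHermitian)
    (hMJ : M * J₀ = J₀ * M) :
    ∃ p q c d : ℝ, M = !![p, 0, c, d; 0, p, -d, c; c, -d, q, 0; d, c, 0, q] := by
  have hsymm : ∀ i j, M j i = M i j := hM.apply
  rw [← Matrix.ext_iff] at hMJ
  simp only [Fin.forall_fin_succ, mul_apply, Fin.sum_univ_four, standardComplexStructure, of_apply,
    cons_val', cons_val_zero, cons_val_one, cons_val, cons_val_fin_one, cons_val_succ,
    Fin.succ_zero_eq_one, Fin.succ_one_eq_two, IsEmpty.forall_iff, and_true] at hMJ hsymm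
  refine ⟨M 0 0, M 2 2, M 2 0, M 3 0, Matrix.ext fun i j => ?_⟩
  fin_cases i <;> fin_cases j <;>
    simp only [Fin.zero_eta, Fin.mk_one, Fin.reduceFinMk, of_apply, cons_val', cons_val,
      cons_val_zero, cons_val_one, cons_val_fin_one] <;> grind

theorem four_mul_wedge22_eq_of_isHermitian_of_commute {M : Matrix (Fin 4) (Fin 4) ℝ}
    (hM : M.IsHermitian) (hMJ : M * J₀ = J₀ * M) (v x₁ x₂ x₃ x₄ : Fin 4 → ℝ) :
    4 * wedge22 (fun x y => (J₀ *ᵥ (M *ᵥ x)) ⬝ᵥ y)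
        (wedge11 (fun x => v ⬝ᵥ x) (fun x => (J₀ *ᵥ v) ⬝ᵥ x)) x₁ x₂ x₃ x₄
      = (M.trace * (v ⬝ᵥ v) - 2 * ((M *ᵥ v) ⬝ᵥ v)) *
          wedge22 (fun x y => (J₀ *ᵥ x) ⬝ᵥ y) (fun x y => (J₀ *ᵥ x) ⬝ᵥ y) x₁ x₂ x₃ x₄ := by
  obtain ⟨p, q, c, d, rfl⟩ := exists_eq_of_isHermitian_of_commute hM hMJ
  simp only [wedge22, wedge11, dotProduct, mulVec, standardComplexStructure, of_apply, cons_val',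
    cons_val_fin_one, Fin.sum_univ_four, cons_val_zero, cons_val_one, cons_val, trace, diag_apply]
  ring

theorem OrthonormalBasis.real_inner_eq_dotProduct {E ι : Type*} [NormedAddCommGroup E]
    [InnerProductSpace ℝ E] [Fintype ι] (b : OrthonormalBasis ι ℝ E) (x y : E) :
    ⟪x, y⟫ = b.toBasis.repr x ⬝ᵥ b.toBasis.repr y := by
  simp [dotProduct, ← b.sum_inner_mul_inner x y, b.repr_apply_apply, real_inner_comm x]

structure IsCompatibleComplexStructure {E : Type*} [NormedAddCommGroup E] [InnerProductSpace ℝ E]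
    (J : E →ₗ[ℝ] E) : Prop where
  apply_apply : ∀ x, J (J x) = -x
  inner_apply_apply : ∀ x y, ⟪J x, J y⟫ = ⟪x, y⟫

namespace IsCompatibleComplexStructure

variable {E : Type*} [NormedAddCommGroup E] [InnerProductSpace ℝ E] {J : E →ₗ[ℝ] E}

theorem inner_apply_left (hJ : IsCompatibleComplexStructure J) (x y : E) :
    ⟪J x, y⟫ = -⟪x, J y⟫ := by
  rw [← hJ.inner_apply_apply, hJ.apply_apply, inner_neg_left]

theorem inner_self_apply_eq_zero (hJ : IsCompatibleComplexStructure J) (x : E) :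
    ⟪x, J x⟫ = 0 := by
  have h := hJ.inner_apply_left x x
  rw [real_inner_comm] at h
  linarith

theorem norm_apply (hJ : IsCompatibleComplexStructure J) (x : E) : ‖J x‖ = ‖x‖ := by
  rw [norm_eq_sqrt_real_inner, norm_eq_sqrt_real_inner, hJ.inner_apply_apply]

theorem orthonormal_vecCons (hJ : IsCompatibleComplexStructure J) {e f : E} (he : ‖e‖ = 1)
    (hf : ‖f‖ = 1) (hef : ⟪e, f⟫ = 0) (hJef : ⟪J e, f⟫ = 0) :
    Orthonormal ℝ ![e, J e, f, J f] := by
  have heJf : ⟪e, J f⟫ = 0 := by rw [← neg_eq_zero, ← hJ.inner_apply_left, hJef]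
  simp [Fin.forall_fin_succ, hJ.norm_apply, he, hf, hef, hJef, heJf, hJ.inner_self_apply_eq_zero,
    hJ.inner_apply_apply]

theorem exists_orthonormal_vecCons (hJ : IsCompatibleComplexStructure J)
    (hdim : 2 < Module.finrank ℝ E) : ∃ e f : E, Orthonormal ℝ ![e, J e, f, J f] := by
  have : FiniteDimensional ℝ E := .of_finrank_pos (by omega)
  have : Nontrivial E := Module.nontrivial_of_finrank_pos (R := ℝ) (by omega)
  obtain ⟨e, he⟩ := exists_norm_eq E zero_le_one
  set K := Submodule.span ℝ (Set.range ![e, J e])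
  have hK : Module.finrank ℝ K ≤ 2 := finrank_range_le_card _
  have : Nontrivial Kᗮ := by
    refine Module.nontrivial_of_finrank_pos (R := ℝ) ?_
    have := K.finrank_add_finrank_orthogonal
    omega
  obtain ⟨f, hf⟩ := exists_norm_eq Kᗮ zero_le_one
  refine ⟨e, f, hJ.orthonormal_vecCons he (by simpa using hf) ?_ ?_⟩
  · exact K.inner_right_of_mem_orthogonal (Submodule.subset_span ⟨0, rfl⟩) f.2
  · exact K.inner_right_of_mem_orthogonal (Submodule.subset_span ⟨1, rfl⟩) f.2

theorem exists_orthonormalBasis_toMatrix_eq (hJ : IsCompatibleComplexStructure J)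
    (hdim : Module.finrank ℝ E = 4) :
    ∃ b : OrthonormalBasis (Fin 4) ℝ E, LinearMap.toMatrix b.toBasis b.toBasis J = J₀ := by
  obtain ⟨e, f, hon⟩ := hJ.exists_orthonormal_vecCons (by omega)
  have hsp := (hon.linearIndependent.span_eq_top_of_card_eq_finrank (by simp [hdim])).ge
  set b := OrthonormalBasis.mk hon hsp
  have hJb : J = Matrix.toLin b.toBasis b.toBasis J₀ := by
    refine b.toBasis.ext fun j => ?_
    rw [Matrix.toLin_self]
    fin_cases j <;> simp [b, Fin.sum_univ_four, standardComplexStructure, hJ.apply_apply]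
  exact ⟨b, by rw [hJb, LinearMap.toMatrix_toLin]⟩

end IsCompatibleComplexStructure

theorem stmt_14_general
    {E : Type*} [NormedAddCommGroup E] [InnerProductSpace ℝ E]
    (hdim : Module.finrank ℝ E = 4)
    (J : E →ₗ[ℝ] E) (hJ2 : ∀ x, J (J x) = -x)
    (hJorth : ∀ x y, ⟪J x, J y⟫ = ⟪x, y⟫)
    (A : E →ₗ[ℝ] E) (hAJ : ∀ x, A (J x) = J (A x))
    (hAsa : ∀ x y, ⟪A x, y⟫ = ⟪x, A y⟫)
    (v : E) :
    ∀ x₁ x₂ x₃ x₄ : E,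
      4 * wedge22 (fun x y => ⟪J (A x), y⟫)
          (wedge11 (fun x => ⟪v, x⟫) (fun x => ⟪J v, x⟫)) x₁ x₂ x₃ x₄
        = (LinearMap.trace ℝ E A * ⟪v, v⟫ - 2 * ⟪A v, v⟫) *
            wedge22 (fun x y => ⟪J x, y⟫) (fun x y => ⟪J x, y⟫) x₁ x₂ x₃ x₄ := by
  have hJ : IsCompatibleComplexStructure J := ⟨hJ2, hJorth⟩
  obtain ⟨b, hJb⟩ := hJ.exists_orthonormalBasis_toMatrix_eq hdim
  set M := LinearMap.toMatrix b.toBasis b.toBasis A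
  have hM : M.IsHermitian := (LinearMap.isHermitian_toMatrix_iff b).mpr hAsa
  have hMJ : M * J₀ = J₀ * M := by
    rw [← hJb, ← LinearMap.toMatrix_mul, ← LinearMap.toMatrix_mul,
      (LinearMap.ext hAJ : A * J = J * A)]
  intro x₁ x₂ x₃ x₄
  simp only [b.real_inner_eq_dotProduct, ← LinearMap.toMatrix_mulVec_repr b.toBasis b.toBasis, hJb,
    LinearMap.trace_eq_matrix_trace ℝ b.toBasis A]
  -- both sides are now the model forms pulled back along the coordinate map `b.toBasis.repr`
  exact four_mul_wedge22_eq_of_isHermitian_of_commute hM hMJ _ _ _ _ _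

/-- formula (14.2) of the paper. On a Kähler surface `(M,g)`
with Kähler form `ω` and complex structure `J`, for a vector field `v` and a
bundle morphism `A` commuting with `J` and self-adjoint, with
`ζ = g(JA·,·)`, `α = g(v,·)`, `ξ = g(Jv,·)`, one has
`4 ζ ∧ α ∧ ξ = [(tr_ℝ A)·g(v,v) − 2 g(Av,v)]·ω ∧ ω`.  Pointwise formulation on
the (real `4`-dimensional) tangent space `E`. -/
theorem stmt_14
    {E : Type*} [NormedAddCommGroup E] [InnerProductSpace ℝ E]
    [FiniteDimensional ℝ E] (hdim : Module.finrank ℝ E = 4)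
    (J : E →ₗ[ℝ] E) (hJ2 : ∀ x, J (J x) = -x)
    (hJorth : ∀ x y, ⟪J x, J y⟫ = ⟪x, y⟫)
    (A : E →ₗ[ℝ] E) (hAJ : ∀ x, A (J x) = J (A x))
    (hAsa : ∀ x y, ⟪A x, y⟫ = ⟪x, A y⟫)
    (v : E) :
    ∀ x₁ x₂ x₃ x₄ : E,
      4 * wedge22 (fun x y => ⟪J (A x), y⟫)
          (wedge11 (fun x => ⟪v, x⟫) (fun x => ⟪J v, x⟫)) x₁ x₂ x₃ x₄
        = (LinearMap.trace ℝ E A * ⟪v, v⟫ - 2 * ⟪A v, v⟫) *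
            wedge22 (fun x y => ⟪J x, y⟫) (fun x y => ⟪J x, y⟫) x₁ x₂ x₃ x₄ :=
  stmt_14_general hdim J hJ2 hJorth A hAJ hAsa v
end
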